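/- Let a ∈ (0,1) and let x ∈ ℝ^K have all coordinates positive. Define D_k = (1/b)·log(c_k x_k/a) for k ∈ K and D_0 = 0; λ̃_i = Σ_{k∈K} k_i μ_i x_k for i ∈ I; and for each edge (k,i) ∈ M, w̃_{k,i} = k_i μ_i x_k and ṽ_{k,i} = λ̃_i x_{k−e_i}/x_{(i)} (with conventions x_0 = a and x_{(i)} = a + Σ_{k∈K: k+e_i∈K} x_k). Then Ξ(x) = Σ_{(k,i)∈M} (D_k − D_{k−e_i})·(ṽ_{k,i} − w̃_{k,i}). -/

import Mathlib

/-!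
Fix `i` and write `d_k = D_k - D_{k-e_i}`, `y_k = x_{k-e_i}`. Since `c_k = k_i c_{k-e_i}`, we get
`b d_k = log (k_i x_k) - log y_k`, so the logarithm in `ξ_{k,k',i}` is `b (d_{k'} - d_k)` and
`ξ_{k,k',i} = (d_{k'} - d_k) w̃_{k,i} y_{k'} / x_{(i)}`. In the double sum over edges, the shift
`k ↦ k - e_i` matches the edges with `0` and the configurations counted in `x_{(i)}`, so
`∑_k y_k = x_{(i)}`; downward closedness puts every `k` with `k_i ≥ 1` on an edge, so
`∑_k w̃_{k,i} = λ̃_i`. What remains is `∑_k d_k (λ̃_i y_k / x_{(i)} - w̃_{k,i})`.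
-/

open Finset

/-- `c_k = ∏_i (k_i)!`. -/
noncomputable def confC {I : Type*} [Fintype I] (k : I → ℕ) : ℝ :=
  ∏ i, (Nat.factorial (k i) : ℝ)

/-- The coordinates of `x` extended by the convention `x_0 = a`. -/
def xeDef {I : Type*} [Fintype I]
    (a : ℝ) (x : (I → ℕ) → ℝ) (m : I → ℕ) : ℝ :=
  if m = 0 then a else x m

/-- `x_{(i)} = a + ∑_{k ∈ K : k + e_i ∈ K} x_k`. -/
noncomputable def xIdxDef {I : Type*} [Fintype I] [DecidableEq I]
    (Kbar : Finset (I → ℕ)) (a : ℝ) (x : (I → ℕ) → ℝ) (i : I) : ℝ :=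
  a + ∑ m ∈ (Kbar.erase 0).filter (fun m => m + Pi.single i 1 ∈ Kbar.erase 0), x m

/-- `ξ_{k,k',i}(x)`, with `b = −log a` and the convention `x_0 = a`. -/
noncomputable def xiDef {I : Type*} [Fintype I] [DecidableEq I]
    (Kbar : Finset (I → ℕ)) (μ : I → ℝ) (a : ℝ) (x : (I → ℕ) → ℝ)
    (k k' : I → ℕ) (i : I) : ℝ :=
  (1 / (-Real.log a)) *
    (Real.log ((k' i : ℝ) * xeDef a x (k - Pi.single i 1) * xeDef a x k')
      - Real.log ((k i : ℝ) * xeDef a x k * xeDef a x (k' - Pi.single i 1))) *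
    ((k i : ℝ) * μ i * xeDef a x k * xeDef a x (k' - Pi.single i 1)) / xIdxDef Kbar a x i

/-- The set of configurations `k` such that `(k, i)` is an edge. -/
def edgesF {I : Type*} [Fintype I] [DecidableEq I]
    (Kbar : Finset (I → ℕ)) (i : I) : Finset (I → ℕ) :=
  (Kbar.erase 0).filter (fun k => 1 ≤ k i ∧ k - Pi.single i 1 ∈ Kbar)

/-- `Ξ(x)` as the full double sum over ordered pairs of edges. -/
noncomputable def XiDef {I : Type*} [Fintype I] [DecidableEq I]
    (Kbar : Finset (I → ℕ)) (μ : I → ℝ) (a : ℝ) (x : (I → ℕ) → ℝ) : ℝ :=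
  ∑ i : I, ∑ k ∈ edgesF Kbar i, ∑ k' ∈ edgesF Kbar i, xiDef Kbar μ a x k k' i

lemma Pi.single_one_le_iff {I : Type*} [DecidableEq I] {k : I → ℕ} {i : I} :
    Pi.single i 1 ≤ k ↔ 1 ≤ k i := by
  refine ⟨fun h => by simpa using h i, fun h j => ?_⟩
  rcases eq_or_ne j i with rfl | hj
  · simpa using h
  · simp [Pi.single_eq_of_ne hj]

lemma Finset.sum_sum_sub_mul_eq {ι : Type*} (s : Finset ι) (d w y : ι → ℝ) {X : ℝ}
    (hX : ∑ k ∈ s, y k = X) (hX0 : X ≠ 0) :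
    ∑ k ∈ s, ∑ k' ∈ s, (d k' - d k) * (w k * y k' / X) =
      ∑ k ∈ s, d k * ((∑ j ∈ s, w j) * y k / X - w k) := by
  have hgain : ∑ k ∈ s, ∑ k' ∈ s, d k' * (w k * y k' / X) =
      ∑ k ∈ s, d k * ((∑ j ∈ s, w j) * y k / X) := by
    rw [Finset.sum_comm]
    refine Finset.sum_congr rfl fun k _ => ?_
    rw [Finset.sum_mul, Finset.sum_div, Finset.mul_sum]
  have hloss : ∑ k ∈ s, ∑ k' ∈ s, d k * (w k * y k' / X) = ∑ k ∈ s, d k * w k := by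
    refine Finset.sum_congr rfl fun k _ => ?_
    simp_rw [← Finset.mul_sum, ← Finset.sum_div, ← Finset.mul_sum, hX, mul_div_cancel_right₀ _ hX0]
  simp only [sub_mul, mul_sub, Finset.sum_sub_distrib, hgain, hloss]

section Configurations

variable {I : Type*} [Fintype I] {a b : ℝ} {x : (I → ℕ) → ℝ} {D : (I → ℕ) → ℝ}

lemma confC_pos (k : I → ℕ) : 0 < confC k :=
  Finset.prod_pos fun _ _ => by exact_mod_cast Nat.factorial_pos _

lemma confC_zero : confC (0 : I → ℕ) = 1 := by
  simp [confC]

lemma xeDef_pos {Kbar : Finset (I → ℕ)} {k : I → ℕ} (ha : 0 < a)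
    (hx : ∀ k ∈ Kbar.erase 0, 0 < x k) (hk : k ∈ Kbar) : 0 < xeDef a x k := by
  unfold xeDef
  split_ifs with h
  · exact ha
  · exact hx k (Finset.mem_erase.mpr ⟨h, hk⟩)

lemma mul_D_eq
    (hD : ∀ k : I → ℕ, D k = if k = 0 then 0 else (1 / b) * Real.log (confC k * x k / a))
    (hb0 : b ≠ 0) (ha : a ≠ 0) {m : I → ℕ} (hm : xeDef a x m ≠ 0) :
    b * D m = Real.log (confC m * xeDef a x m) - Real.log a := by
  rw [hD, xeDef]
  split_ifs with h
  · simp [h, confC_zero]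
  · rw [xeDef, if_neg h] at hm
    rw [← mul_assoc, mul_one_div_cancel hb0, one_mul,
      Real.log_div (mul_ne_zero (confC_pos m).ne' hm) ha]

variable [DecidableEq I]

lemma confC_eq_mul_confC_sub_single {k : I → ℕ} {i : I} (hk : 1 ≤ k i) :
    confC k = k i * confC (k - Pi.single i 1) := by
  unfold confC
  rw [Fintype.prod_eq_mul_prod_compl i, Fintype.prod_eq_mul_prod_compl i, ← mul_assoc]
  congr 1
  · rw [Pi.sub_apply, Pi.single_eq_same, ← Nat.cast_mul, Nat.mul_factorial_pred (by omega)]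
  · refine Finset.prod_congr rfl fun j hj => ?_
    rw [Pi.sub_apply, Pi.single_eq_of_ne (by simpa using hj), Nat.sub_zero]

variable {Kbar : Finset (I → ℕ)} {i : I} {k : I → ℕ}

lemma mem_edgesF :
    k ∈ edgesF Kbar i ↔ k ≠ 0 ∧ k ∈ Kbar ∧ 1 ≤ k i ∧ k - Pi.single i 1 ∈ Kbar := by
  simp [edgesF, and_assoc]

lemma single_mem_edgesF (h0 : (0 : I → ℕ) ∈ Kbar) (hunit : Pi.single i 1 ∈ Kbar) :
    Pi.single i 1 ∈ edgesF Kbar i := by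
  simp [mem_edgesF, hunit, h0]

lemma sum_edgesF_natCast_mul
    (hmono : ∀ k ∈ Kbar, ∀ k' : I → ℕ, (∀ i, k' i ≤ k i) → k' ∈ Kbar) (g : (I → ℕ) → ℝ) :
    ∑ k ∈ edgesF Kbar i, (k i : ℝ) * g k = ∑ k ∈ Kbar.erase 0, (k i : ℝ) * g k := by
  refine Finset.sum_subset (Finset.filter_subset _ _) fun k hk hkE => ?_
  have hki : k i = 0 := by
    by_contra hki
    obtain ⟨hk0, hkK⟩ := Finset.mem_erase.mp hk
    exact hkE (mem_edgesF.mpr ⟨hk0, hkK, Nat.one_le_iff_ne_zero.mpr hki,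
      hmono k hkK _ fun j => Nat.sub_le _ _⟩)
  simp [hki]

lemma xIdxDef_pos (ha : 0 < a) (hx : ∀ k ∈ Kbar.erase 0, 0 < x k) (i : I) :
    0 < xIdxDef Kbar a x i :=
  add_pos_of_pos_of_nonneg ha <|
    Finset.sum_nonneg fun m hm => (hx m (Finset.mem_filter.mp hm).1).le

lemma sum_edgesF_xeDef_sub_single (h0 : (0 : I → ℕ) ∈ Kbar) (hunit : Pi.single i 1 ∈ Kbar) :
    ∑ k ∈ edgesF Kbar i, xeDef a x (k - Pi.single i 1) = xIdxDef Kbar a x i := by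
  rw [xIdxDef, ← Finset.add_sum_erase _ _ (single_mem_edgesF h0 hunit), tsub_self, xeDef,
    if_pos rfl]
  congr 1
  have hsub_ne : ∀ k ∈ (edgesF Kbar i).erase (Pi.single i 1), k - Pi.single i 1 ≠ 0 := by
    intro k hk hz
    obtain ⟨hne, hkE⟩ := Finset.mem_erase.mp hk
    have hle := Pi.single_one_le_iff.mpr (mem_edgesF.mp hkE).2.2.1
    exact hne (le_antisymm (tsub_eq_zero_iff_le.mp hz) hle)
  refine Finset.sum_nbij' (· - Pi.single i 1) (· + Pi.single i 1) ?_ ?_ ?_ ?_ ?_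
  · intro k hk
    obtain ⟨hk0, hkK, hki, hsubK⟩ := mem_edgesF.mp (Finset.mem_erase.mp hk).2
    rw [Finset.mem_filter, Finset.mem_erase, Finset.mem_erase,
      tsub_add_cancel_of_le (Pi.single_one_le_iff.mpr hki)]
    exact ⟨⟨hsub_ne k hk, hsubK⟩, hk0, hkK⟩
  · intro m hm
    rw [Finset.mem_filter, Finset.mem_erase, Finset.mem_erase] at hm
    obtain ⟨⟨hm0, hmK⟩, hme0, hmeK⟩ := hm
    rw [Finset.mem_erase, mem_edgesF, add_tsub_cancel_right]
    exact ⟨fun h => hm0 (add_eq_right.mp h), hme0, hmeK, by simp, hmK⟩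
  · intro k hk
    exact tsub_add_cancel_of_le (Pi.single_one_le_iff.mpr
      (mem_edgesF.mp (Finset.mem_erase.mp hk).2).2.2.1)
  · intro m _
    exact add_tsub_cancel_right m _
  · intro k hk
    rw [xeDef, if_neg (hsub_ne k hk)]

lemma mul_D_sub_D_sub_single
    (hD : ∀ k : I → ℕ, D k = if k = 0 then 0 else (1 / b) * Real.log (confC k * x k / a))
    (hb0 : b ≠ 0) (ha : a ≠ 0) (hki : 1 ≤ k i) (hk : xeDef a x k ≠ 0)
    (hk' : xeDef a x (k - Pi.single i 1) ≠ 0) :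
    b * (D k - D (k - Pi.single i 1)) =
      Real.log (k i * xeDef a x k) - Real.log (xeDef a x (k - Pi.single i 1)) := by
  have hki' : (k i : ℝ) ≠ 0 := by positivity
  have hc := (confC_pos (k - Pi.single i 1)).ne'
  rw [mul_sub, mul_D_eq hD hb0 ha hk, mul_D_eq hD hb0 ha hk',
    confC_eq_mul_confC_sub_single hki, Real.log_mul hki' hk, mul_assoc,
    Real.log_mul hki' (mul_ne_zero hc hk), Real.log_mul hc hk, Real.log_mul hc hk']
  ring

lemma xiDef_eq (μ : I → ℝ) (ha0 : 0 < a) (hb : b = -Real.log a) (hb0 : b ≠ 0)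
    (hx : ∀ k ∈ Kbar.erase 0, 0 < x k)
    (hD : ∀ k : I → ℕ, D k = if k = 0 then 0 else (1 / b) * Real.log (confC k * x k / a))
    {k' : I → ℕ} (hk : k ∈ edgesF Kbar i) (hk' : k' ∈ edgesF Kbar i) :
    xiDef Kbar μ a x k k' i =
      ((D k' - D (k' - Pi.single i 1)) - (D k - D (k - Pi.single i 1))) *
        (k i * μ i * xeDef a x k * xeDef a x (k' - Pi.single i 1) / xIdxDef Kbar a x i) := by
  obtain ⟨-, hkK, hki, hsubK⟩ := mem_edgesF.mp hk
  obtain ⟨-, hkK', hki', hsubK'⟩ := mem_edgesF.mp hk'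
  have hxk := xeDef_pos ha0 hx hkK
  have hxk' := xeDef_pos ha0 hx hkK'
  have hy := xeDef_pos ha0 hx hsubK
  have hy' := xeDef_pos ha0 hx hsubK'
  have hkic : (0 : ℝ) < k i := by exact_mod_cast hki
  have hkic' : (0 : ℝ) < k' i := by exact_mod_cast hki'
  have hlog : Real.log (k' i * xeDef a x (k - Pi.single i 1) * xeDef a x k') -
      Real.log (k i * xeDef a x k * xeDef a x (k' - Pi.single i 1)) =
      b * (D k' - D (k' - Pi.single i 1)) - b * (D k - D (k - Pi.single i 1)) := by
    rw [mul_D_sub_D_sub_single hD hb0 ha0.ne' hki hxk.ne' hy.ne',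
      mul_D_sub_D_sub_single hD hb0 ha0.ne' hki' hxk'.ne' hy'.ne',
      mul_right_comm, Real.log_mul (by positivity) hy.ne',
      Real.log_mul (by positivity) hy'.ne']
    ring
  rw [xiDef, ← hb, hlog]
  field_simp

end Configurations

theorem Xi_eq_gradient_form_general
    {I : Type*} [Fintype I] [DecidableEq I]
    (Kbar : Finset (I → ℕ))
    (h0 : (0 : I → ℕ) ∈ Kbar)
    (hunit : ∀ i : I, Pi.single i 1 ∈ Kbar)
    (hmono : ∀ k ∈ Kbar, ∀ k' : I → ℕ, (∀ i, k' i ≤ k i) → k' ∈ Kbar)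
    (μ : I → ℝ)
    (a : ℝ) (ha : a ∈ Set.Ioo (0 : ℝ) 1)
    (b : ℝ) (hb : b = -Real.log a)
    (x : (I → ℕ) → ℝ) (hx : ∀ k ∈ Kbar.erase 0, 0 < x k)
    (D : (I → ℕ) → ℝ)
    (hD : ∀ k : I → ℕ, D k = if k = 0 then 0 else (1 / b) * Real.log (confC k * x k / a))
    (lam : I → ℝ) (hlam : ∀ i, lam i = ∑ k ∈ Kbar.erase 0, (k i : ℝ) * μ i * x k)
    (w : (I → ℕ) → I → ℝ) (hw : ∀ k i, w k i = (k i : ℝ) * μ i * x k)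
    (v : (I → ℕ) → I → ℝ)
    (hv : ∀ k i, v k i = lam i * xeDef a x (k - Pi.single i 1) / xIdxDef Kbar a x i) :
    XiDef Kbar μ a x =
      ∑ i : I, ∑ k ∈ edgesF Kbar i,
        (D k - D (k - Pi.single i 1)) * (v k i - w k i) := by
  obtain ⟨ha0, ha1⟩ := ha
  have hb0 : b ≠ 0 := hb ▸ neg_ne_zero.mpr (Real.log_neg ha0 ha1).ne
  refine Finset.sum_congr rfl fun i _ => ?_
  have hxi : ∀ k ∈ edgesF Kbar i, ∀ k' ∈ edgesF Kbar i, xiDef Kbar μ a x k k' i =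
      ((D k' - D (k' - Pi.single i 1)) - (D k - D (k - Pi.single i 1))) *
        (w k i * xeDef a x (k' - Pi.single i 1) / xIdxDef Kbar a x i) := by
    intro k hk k' hk'
    rw [xiDef_eq μ ha0 hb hb0 hx hD hk hk', hw, xeDef, if_neg (mem_edgesF.mp hk).1]
  have hsum_w : ∑ k ∈ edgesF Kbar i, w k i = lam i := by
    simp only [hw, hlam, mul_assoc]
    exact sum_edgesF_natCast_mul hmono _
  rw [Finset.sum_congr rfl fun k hk => Finset.sum_congr rfl (hxi k hk),
    Finset.sum_sum_sub_mul_eq _ _ _ _ (sum_edgesF_xeDef_sub_single h0 (hunit i))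
      (xIdxDef_pos ha0 hx i).ne', hsum_w]
  simp only [hv]

/-- identity (eq-xi-is-derivative):
`Ξ(x) = ∑_{(k,i)∈M} (D_k − D_{k−e_i})·(ṽ_{k,i} − w̃_{k,i})`, where
`D_k = (1/b) log(c_k x_k/a)`, `D_0 = 0`, `λ̃_i = ∑_{k∈K} k_i μ_i x_k`,
`w̃_{k,i} = k_i μ_i x_k` and `ṽ_{k,i} = λ̃_i x_{k−e_i}/x_{(i)}`. -/
theorem Xi_eq_gradient_form
    {I : Type*} [Fintype I] [DecidableEq I] [Nonempty I]
    (Kbar : Finset (I → ℕ))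
    (h0 : (0 : I → ℕ) ∈ Kbar)
    (hunit : ∀ i : I, Pi.single i 1 ∈ Kbar)
    (hmono : ∀ k ∈ Kbar, ∀ k' : I → ℕ, (∀ i, k' i ≤ k i) → k' ∈ Kbar)
    (μ : I → ℝ) (hμ : ∀ i, 0 < μ i)
    (a : ℝ) (ha : a ∈ Set.Ioo (0 : ℝ) 1)
    (b : ℝ) (hb : b = -Real.log a)
    (x : (I → ℕ) → ℝ) (hx : ∀ k ∈ Kbar.erase 0, 0 < x k)
    (D : (I → ℕ) → ℝ)
    (hD : ∀ k : I → ℕ, D k = if k = 0 then 0 else (1 / b) * Real.log (confC k * x k / a))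
    (lam : I → ℝ) (hlam : ∀ i, lam i = ∑ k ∈ Kbar.erase 0, (k i : ℝ) * μ i * x k)
    (w : (I → ℕ) → I → ℝ) (hw : ∀ k i, w k i = (k i : ℝ) * μ i * x k)
    (v : (I → ℕ) → I → ℝ)
    (hv : ∀ k i, v k i = lam i * xeDef a x (k - Pi.single i 1) / xIdxDef Kbar a x i) :
    XiDef Kbar μ a x =
      ∑ i : I, ∑ k ∈ edgesF Kbar i,
        (D k - D (k - Pi.single i 1)) * (v k i - w k i) :=
  Xi_eq_gradient_form_general Kbar h0 hunit hmono μ a ha b hb x hx D hD lam hlam w hw v hv
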